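/- Let α : ℕ → ℝ satisfy α(n) → +∞ and α(n) = o(log n), and let p(n) = (log n + α(n))/n. Then with high probability, for every pair of disjoint vertex subsets U, W of the Erdős–Rényi random graph G(n, p(n)) with |U| ≥ n/(log log n) and |W| ≥ n/(log log n), there is at least one edge with one endpoint in U and the other in W; that is, the probability of this event tends to 1 as n tends to infinity. -/

import Mathlib

/-!
Union bound over the at most `4 ^ n` pairs `(U, W)`: a fixed disjoint pair with `|U|, |W| ≥ m`
spans no edge with probability `(1 - p) ^ (|U| |W|) ≤ exp (-p m²)`. For `m = n / log log n` and
`p = (1 + o(1)) log n / n` the exponent `p m² = (1 + o(1)) n log n / (log log n)²` eventually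
dominates `n log 4`, so the failure probability tends to `0`.
-/

open Classical in
/-- The probability that the Erdős–Rényi random graph `G(n,p)` lies in the event `A`:
each graph `G` on `Fin n` has probability `p^(#edges of G) * (1-p)^((n choose 2) - #edges of G)`. -/
noncomputable def erProb (n : ℕ) (p : ℝ) (A : Set (SimpleGraph (Fin n))) : ℝ :=
  ∑ G : SimpleGraph (Fin n),
    if G ∈ A then p ^ G.edgeSet.ncard * (1 - p) ^ (n.choose 2 - G.edgeSet.ncard) else 0

open Finset Filter Real Topology

theorem Finset.sum_powerset_filter_disjoint_pow_mul_one_sub_pow {ι R : Type*} [DecidableEq ι]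
    [CommRing R] {T F : Finset ι} (hF : F ⊆ T) (p : R) :
    ∑ s ∈ T.powerset with Disjoint s F, p ^ #s * (1 - p) ^ (#T - #s) = (1 - p) ^ #F := by
  have hfilter : {s ∈ T.powerset | Disjoint s F} = (T \ F).powerset := by
    ext s; simp [subset_sdiff]
  have hT : #T = #(T \ F) + #F := (card_sdiff_add_card_eq_card hF).symm
  calc ∑ s ∈ T.powerset with Disjoint s F, p ^ #s * (1 - p) ^ (#T - #s)
      = ∑ s ∈ (T \ F).powerset, p ^ #s * (1 - p) ^ (#T - #s) := by rw [hfilter]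
    _ = (1 - p) ^ #F * ∑ s ∈ (T \ F).powerset, p ^ #s * (1 - p) ^ (#(T \ F) - #s) := by
      rw [mul_sum]
      refine sum_congr rfl fun s hs => ?_
      have hs : #s ≤ #(T \ F) := card_le_card (mem_powerset.1 hs)
      rw [hT, show #(T \ F) + #F - #s = #(T \ F) - #s + #F by omega, pow_add]
      ring
    _ = (1 - p) ^ #F := by rw [sum_pow_mul_eq_add_pow, add_sub_cancel, one_pow, mul_one]

namespace SimpleGraph

variable {V : Type*} [DecidableEq V]

def crossEdges (U W : Finset V) : Finset (Sym2 V) := (U ×ˢ W).image fun x => s(x.1, x.2)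

theorem card_crossEdges {U W : Finset V} (h : Disjoint U W) : #(crossEdges U W) = #U * #W := by
  rw [crossEdges, card_image_of_injOn, card_product]
  rintro ⟨u, w⟩ huw ⟨u', w'⟩ huw' heq
  simp only [coe_product, Set.mem_prod, mem_coe] at huw huw'
  rcases Sym2.eq_iff.1 heq with ⟨rfl, rfl⟩ | ⟨rfl, -⟩
  · rfl
  · exact absurd huw'.2 (Finset.disjoint_left.1 h huw.1)

variable [Fintype V] {U W : Finset V}

open Classical in
theorem sum_comp_edgeFinset_eq_sum_powerset {M : Type*} [AddCommMonoid M]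
    (f : Finset (Sym2 V) → M) :
    ∑ G : SimpleGraph V, f G.edgeFinset =
      ∑ s ∈ (⊤ : SimpleGraph V).edgeFinset.powerset, f s := by
  refine sum_nbij' (fun G => G.edgeFinset) (fun s => fromEdgeSet s) (fun G _ => ?_)
    (fun _ _ => mem_univ _) (fun G _ => ?_) (fun s hs => ?_) (fun _ _ => rfl)
  · exact mem_powerset.2 (edgeFinset_subset_edgeFinset.2 le_top)
  · simp
  · have hsub : ∀ e ∈ s, ¬ e.IsDiag := fun e he => by
      simpa using (mem_powerset.1 hs) he
    ext e
    simp only [mem_edgeFinset, edgeSet_fromEdgeSet, Set.mem_sdiff, mem_coe]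
    exact ⟨fun h => h.1, fun h => ⟨h, hsub e h⟩⟩

theorem crossEdges_subset_edgeFinset_top (h : Disjoint U W) :
    crossEdges U W ⊆ (⊤ : SimpleGraph V).edgeFinset := by
  simp only [crossEdges, image_subset_iff, mem_product, mem_edgeFinset, edgeSet_top]
  rintro ⟨u, w⟩ ⟨hu, hw⟩
  simpa using fun huw : u = w => Finset.disjoint_left.1 h hu (huw ▸ hw : u ∈ W)

theorem disjoint_edgeFinset_crossEdges {G : SimpleGraph V} [DecidableRel G.Adj] :
    Disjoint G.edgeFinset (crossEdges U W) ↔ ∀ u ∈ U, ∀ w ∈ W, ¬ G.Adj u w := by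
  simp only [Finset.disjoint_right, crossEdges, mem_image, mem_product, mem_edgeFinset]
  constructor
  · exact fun h u hu w hw hadj => h ⟨(u, w), ⟨hu, hw⟩, rfl⟩ hadj
  · rintro h _ ⟨⟨u, w⟩, ⟨hu, hw⟩, rfl⟩
    exact h u hu w hw

end SimpleGraph

section erProb

open SimpleGraph Classical

variable {n : ℕ} {p : ℝ}

theorem erProb_nonneg (hp0 : 0 ≤ p) (hp1 : p ≤ 1) (A : Set (SimpleGraph (Fin n))) :
    0 ≤ erProb n p A :=
  sum_nonneg fun _ _ =>
    ite_nonneg (mul_nonneg (pow_nonneg hp0 _) (pow_nonneg (sub_nonneg.2 hp1) _)) le_rfl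

theorem erProb_disjoint_edgeFinset {F : Finset (Sym2 (Fin n))}
    (hF : F ⊆ (⊤ : SimpleGraph (Fin n)).edgeFinset) (p : ℝ) :
    erProb n p {G | Disjoint G.edgeFinset F} = (1 - p) ^ #F := by
  have hT : n.choose 2 = #(⊤ : SimpleGraph (Fin n)).edgeFinset := by
    rw [card_edgeFinset_top_eq_card_choose_two, Fintype.card_fin]
  have hcard (G : SimpleGraph (Fin n)) : G.edgeSet.ncard = #G.edgeFinset := by
    rw [← coe_edgeFinset, Set.ncard_coe_finset]
  simp only [erProb, Set.mem_ofPred_eq, hcard, hT]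
  rw [sum_comp_edgeFinset_eq_sum_powerset (fun s => if Disjoint s F then
      p ^ #s * (1 - p) ^ (#(⊤ : SimpleGraph (Fin n)).edgeFinset - #s) else 0),
    ← sum_filter, sum_powerset_filter_disjoint_pow_mul_one_sub_pow hF]

theorem erProb_univ (p : ℝ) : erProb n p Set.univ = 1 := by
  simpa using erProb_disjoint_edgeFinset (empty_subset (⊤ : SimpleGraph (Fin n)).edgeFinset) p

theorem erProb_add_erProb_compl (p : ℝ) (A : Set (SimpleGraph (Fin n))) :
    erProb n p A + erProb n p Aᶜ = 1 := by
  rw [← erProb_univ (n := n) p, erProb, erProb, erProb, ← sum_add_distrib]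
  refine sum_congr rfl fun G _ => ?_
  by_cases hG : G ∈ A <;> simp [hG]

theorem erProb_le_one (hp0 : 0 ≤ p) (hp1 : p ≤ 1) (A : Set (SimpleGraph (Fin n))) :
    erProb n p A ≤ 1 := by
  linarith [erProb_add_erProb_compl p A, erProb_nonneg hp0 hp1 Aᶜ]

theorem erProb_le_sum_of_subset_biUnion (hp0 : 0 ≤ p) (hp1 : p ≤ 1) {ι : Type*} {I : Finset ι}
    {A : Set (SimpleGraph (Fin n))} {B : ι → Set (SimpleGraph (Fin n))}
    (h : A ⊆ ⋃ i ∈ I, B i) : erProb n p A ≤ ∑ i ∈ I, erProb n p (B i) := by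
  set w : SimpleGraph (Fin n) → ℝ :=
    fun G => p ^ G.edgeSet.ncard * (1 - p) ^ (n.choose 2 - G.edgeSet.ncard)
  have hw (G) : 0 ≤ w G := mul_nonneg (pow_nonneg hp0 _) (pow_nonneg (sub_nonneg.2 hp1) _)
  simp only [erProb]
  rw [sum_comm]
  refine sum_le_sum fun G _ => ?_
  split_ifs with hG
  · obtain ⟨i, hi, hGi⟩ := Set.mem_iUnion₂.1 (h hG)
    calc w G = if G ∈ B i then w G else 0 := (if_pos hGi).symm
      _ ≤ ∑ j ∈ I, if G ∈ B j then w G else 0 :=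
        single_le_sum (f := fun j => if G ∈ B j then w G else 0)
          (fun j _ => ite_nonneg (hw G) le_rfl) hi
  · exact sum_nonneg fun j _ => ite_nonneg (hw G) le_rfl

theorem erProb_forall_not_adj {U W : Finset (Fin n)} (hUW : Disjoint U W) (p : ℝ) :
    erProb n p {G | ∀ u ∈ U, ∀ w ∈ W, ¬ G.Adj u w} = (1 - p) ^ (#U * #W) := by
  rw [← card_crossEdges hUW,
    ← erProb_disjoint_edgeFinset (crossEdges_subset_edgeFinset_top hUW)]
  simp only [disjoint_edgeFinset_crossEdges]

theorem erProb_forall_not_adj_le_exp {m : ℝ} (hp0 : 0 ≤ p) (hp1 : p ≤ 1) (hm : 0 ≤ m)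
    {U W : Finset (Fin n)} (hUW : Disjoint U W) (hU : m ≤ #U) (hW : m ≤ #W) :
    erProb n p {G | ∀ u ∈ U, ∀ w ∈ W, ¬ G.Adj u w} ≤ exp (-(p * m ^ 2)) := by
  rw [erProb_forall_not_adj hUW]
  calc (1 - p) ^ (#U * #W) ≤ exp (-p) ^ (#U * #W) :=
        pow_le_pow_left₀ (sub_nonneg.2 hp1) (one_sub_le_exp_neg p) _
    _ = exp (-(p * (#U * #W : ℕ))) := by rw [← exp_nat_mul]; ring_nf
    _ ≤ exp (-(p * m ^ 2)) := by
      gcongr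
      push_cast
      nlinarith

theorem one_sub_four_pow_mul_exp_le_erProb {m : ℝ} (hp0 : 0 ≤ p) (hp1 : p ≤ 1)
    (hm : 0 ≤ m) :
    1 - 4 ^ n * exp (-(p * m ^ 2)) ≤ erProb n p {G | ∀ U W : Set (Fin n), Disjoint U W →
      m ≤ U.ncard → m ≤ W.ncard → ∃ u ∈ U, ∃ w ∈ W, G.Adj u w} := by
  set A : Set (SimpleGraph (Fin n)) := {G | ∀ U W : Set (Fin n), Disjoint U W →
      m ≤ U.ncard → m ≤ W.ncard → ∃ u ∈ U, ∃ w ∈ W, G.Adj u w}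
  set I : Finset (Finset (Fin n) × Finset (Fin n)) :=
    {UW | Disjoint UW.1 UW.2 ∧ m ≤ #UW.1 ∧ m ≤ #UW.2}
  have hcover : Aᶜ ⊆ ⋃ UW ∈ I, {G | ∀ u ∈ UW.1, ∀ w ∈ UW.2, ¬ G.Adj u w} := by
    intro G hG
    simp only [A, Set.mem_compl_iff, Set.mem_ofPred_eq] at hG
    push Not at hG
    obtain ⟨U, W, hUW, hU, hW, hno⟩ := hG
    refine Set.mem_iUnion₂.2 ⟨(U.toFinset, W.toFinset), ?_, ?_⟩
    · rw [Set.ncard_eq_toFinset_card'] at hU hW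
      exact mem_filter.2 ⟨mem_univ _, Set.disjoint_toFinset.2 hUW, hU, hW⟩
    · simpa using hno
  have hcard : (#I : ℝ) ≤ 4 ^ n := by
    calc (#I : ℝ) ≤ Fintype.card (Finset (Fin n) × Finset (Fin n)) := by
          exact_mod_cast card_filter_le _ _
      _ = 4 ^ n := by simp [Fintype.card_finset, ← mul_pow]
  calc 1 - 4 ^ n * exp (-(p * m ^ 2)) ≤ 1 - ∑ _UW ∈ I, exp (-(p * m ^ 2)) := by
        rw [sum_const, nsmul_eq_mul]
        gcongr
    _ ≤ 1 - ∑ UW ∈ I, erProb n p {G | ∀ u ∈ UW.1, ∀ w ∈ UW.2, ¬ G.Adj u w} := by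
        gcongr with UW hUW
        obtain ⟨hUW, hU, hW⟩ := (mem_filter.1 hUW).2
        exact erProb_forall_not_adj_le_exp hp0 hp1 hm hUW hU hW
    _ ≤ 1 - erProb n p Aᶜ := by
        gcongr
        exact erProb_le_sum_of_subset_biUnion hp0 hp1 hcover
    _ = erProb n p A := by linarith [erProb_add_erProb_compl p A]

end erProb

section Asymptotics

variable {α : ℕ → ℝ}

theorem tendsto_log_natCast_atTop : Tendsto (fun n : ℕ => log n) atTop atTop :=
  tendsto_log_atTop.comp tendsto_natCast_atTop_atTop

theorem tendsto_log_log_natCast_atTop : Tendsto (fun n : ℕ => log (log n)) atTop atTop :=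
  tendsto_log_atTop.comp tendsto_log_natCast_atTop

theorem tendsto_log_div_log_log_sq_atTop :
    Tendsto (fun n : ℕ => log n / log (log n) ^ 2) atTop atTop := by
  refine ((tendsto_exp_div_pow_atTop 2).comp tendsto_log_log_natCast_atTop).congr' ?_
  filter_upwards [tendsto_log_natCast_atTop.eventually_gt_atTop 0] with n hn
  simp [exp_log hn]

theorem tendsto_log_add_div_log (hαo : Tendsto (fun n : ℕ => α n / log n) atTop (𝓝 0)) :
    Tendsto (fun n : ℕ => (log n + α n) / log n) atTop (𝓝 1) := by
  have h : Tendsto (fun n : ℕ => 1 + α n / log n) atTop (𝓝 1) := by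
    simpa using hαo.const_add 1
  refine h.congr' ?_
  filter_upwards [tendsto_log_natCast_atTop.eventually_ne_atTop 0] with n hn
  rw [add_div, div_self hn]

theorem eventually_log_add_div_mem_Icc
    (hαo : Tendsto (fun n : ℕ => α n / log n) atTop (𝓝 0)) :
    ∀ᶠ n : ℕ in atTop, (log n + α n) / n ∈ Set.Icc 0 1 := by
  have hlog_div : Tendsto (fun n : ℕ => log n / n) atTop (𝓝 0) := by
    simpa [Function.comp_def] using (tendsto_pow_log_div_mul_add_atTop 1 0 1 one_ne_zero).comp
      tendsto_natCast_atTop_atTop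
  have hp : Tendsto (fun n : ℕ => (log n + α n) / n) atTop (𝓝 0) := by
    have h : Tendsto (fun n : ℕ => (log n + α n) / log n * (log n / n)) atTop (𝓝 0) := by
      simpa using (tendsto_log_add_div_log hαo).mul hlog_div
    refine h.congr' ?_
    filter_upwards [tendsto_log_natCast_atTop.eventually_ne_atTop 0] with n hn
    field_simp
  filter_upwards [hp.eventually_le_const zero_lt_one,
    (tendsto_log_add_div_log hαo).eventually_const_lt zero_lt_one,
    tendsto_log_natCast_atTop.eventually_gt_atTop 0] with n hp1 hc hlog
  exact ⟨div_nonneg ((div_pos_iff_of_pos_right hlog).1 hc).le n.cast_nonneg, hp1⟩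

theorem tendsto_four_pow_mul_exp_neg (hαo : Tendsto (fun n : ℕ => α n / log n) atTop (𝓝 0)) :
    Tendsto (fun n : ℕ => (4 : ℝ) ^ n * exp (-((log n + α n) / n * (n / log (log n)) ^ 2)))
      atTop (𝓝 0) := by
  have hexponent : Tendsto (fun n : ℕ =>
      (n : ℝ) * (log 4 + -((log n + α n) / log n * (log n / log (log n) ^ 2)))) atTop atBot :=
    tendsto_natCast_atTop_atTop.atTop_mul_atBot₀ <| tendsto_atBot_add_const_left _ _ <|
      tendsto_neg_atTop_atBot.comp <|
        (tendsto_log_add_div_log hαo).pos_mul_atTop one_pos tendsto_log_div_log_log_sq_atTop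
  refine (tendsto_exp_atBot.comp hexponent).congr' ?_
  filter_upwards [eventually_gt_atTop 0, tendsto_log_natCast_atTop.eventually_gt_atTop 0,
    tendsto_log_log_natCast_atTop.eventually_gt_atTop 0] with n hn hlog hloglog
  have hfour : (4 : ℝ) ^ n = exp (n * log 4) := by rw [exp_nat_mul, exp_log (by norm_num)]
  rw [Function.comp_apply, hfour, ← exp_add]
  congr 1
  field_simp

end Asymptotics

theorem er_large_sets_joined_whp_general (α : ℕ → ℝ)
    (hαo : Filter.Tendsto (fun n : ℕ => α n / Real.log n) Filter.atTop (nhds 0)) :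
    Filter.Tendsto
      (fun n : ℕ => erProb n ((Real.log n + α n) / n)
        {G | ∀ U W : Set (Fin n), Disjoint U W →
          (n : ℝ) / Real.log (Real.log n) ≤ (U.ncard : ℝ) →
          (n : ℝ) / Real.log (Real.log n) ≤ (W.ncard : ℝ) →
          ∃ u ∈ U, ∃ w ∈ W, G.Adj u w})
      Filter.atTop (nhds 1) := by
  have hp := eventually_log_add_div_mem_Icc hαo
  have hm : ∀ᶠ n : ℕ in atTop, 0 ≤ (n : ℝ) / log (log n) := by
    filter_upwards [tendsto_log_log_natCast_atTop.eventually_ge_atTop 0]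
      with n hn using div_nonneg n.cast_nonneg hn
  have hlower : Tendsto (fun n : ℕ =>
      1 - 4 ^ n * exp (-((log n + α n) / n * (n / log (log n)) ^ 2))) atTop (𝓝 1) := by
    simpa using (tendsto_four_pow_mul_exp_neg hαo).const_sub 1
  refine tendsto_of_tendsto_of_tendsto_of_le_of_le' hlower tendsto_const_nhds ?_ ?_
  · filter_upwards [hp, hm] with n hpn hmn
    exact one_sub_four_pow_mul_exp_le_erProb hpn.1 hpn.2 hmn
  · filter_upwards [hp] with n hpn
    exact erProb_le_one hpn.1 hpn.2 _

/-- If `α n → +∞`, `α n = o(log n)`, and `p n = (log n + α n) / n`, then w.h.p. any two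
disjoint vertex subsets `U, W` of `G(n, p n)`, each of size at least `n / log log n`, are
joined by at least one edge. -/
theorem er_large_sets_joined_whp (α : ℕ → ℝ)
    (hα : Filter.Tendsto α Filter.atTop Filter.atTop)
    (hαo : Filter.Tendsto (fun n : ℕ => α n / Real.log n) Filter.atTop (nhds 0)) :
    Filter.Tendsto
      (fun n : ℕ => erProb n ((Real.log n + α n) / n)
        {G | ∀ U W : Set (Fin n), Disjoint U W →
          (n : ℝ) / Real.log (Real.log n) ≤ (U.ncard : ℝ) →
          (n : ℝ) / Real.log (Real.log n) ≤ (W.ncard : ℝ) →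
          ∃ u ∈ U, ∃ w ∈ W, G.Adj u w})
      Filter.atTop (nhds 1) :=
  er_large_sets_joined_whp_general α hαo
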